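/- Let N' ≥ 1, let p_1,...,p_{N'} be reals with 0 ≤ p_1 ≤ ... ≤ p_{N'}, let L ≥ 0, and let k ≥ 2 and l ≥ 0 be reals. Define q_j = min(p_j, L) and r_j = k·p_j + l·q_j. Then max over (σ_1,...,σ_{N'}) ∈ {−1,1}^{N'} of [Σ_{j=1}^{N'} σ_j·(k·p_j + (l−1)·q_j) − Σ_{1≤j<j'≤N'} σ_j·σ_{j'}·r_j] equals max( max over σ ∈ {−1,1}^{N'} of [Σ_{j=1}^{N'} σ_j·((k−2)·p_j + (l+1)·q_j) − Σ_{1≤j<j'≤N'} σ_j·σ_{j'}·r_j], max over σ ∈ {−1,1}^{N'} of [Σ_{j=1}^{N'} σ_j·(k·p_j + (l+1)·q_j) − Σ_{1≤j<j'≤N'} σ_j·σ_{j'}·r_j] − 2L ). -/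

import Mathlib

/-!
Peeling off the last sign turns `sigMax` into a Bellman recursion in which the remaining
coefficients are shifted, `a ↦ a ∓ r`. Writing `a = θ r + x` with `r = x + y`, this shift is
`θ ↦ θ ∓ 1`, and flipping all signs is the symmetry `(x, y, θ) ↦ (y, x, -1 - θ)`. When `x` and `y`
are nonnegative and nondecreasing, a slope bound on `θ ↦ sigMax`, proved by induction on the length,
shows that the last sign `+1` is optimal for `θ ≥ 0` (and `-1` for `θ < 0`, by the symmetry). The
maxima are therefore attained by explicit sign patterns: the third maximum of the identity exceeds
the first by `2 q_N`, and the first exceeds the second by an alternating sum of the nondecreasing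
`2 (p_j - q_j)`, which lies in `[0, 2 (p_N - q_N)]`. Since `q_N = min p_N L`, either `q_N = L` or
`q_N = p_N`, so one argument of the outer `max` equals the left side and the other is at most it.
-/

open Finset

/-- Maximum over all sign choices `(σ_1,...,σ_N) ∈ {−1,1}^N` of
`Σ_j σ_j a_j − Σ_{j<j'} σ_j σ_{j'} r_j`. -/
noncomputable def sigMax (N : ℕ) (a r : Fin N → ℝ) : ℝ :=
  Finset.univ.sup' Finset.univ_nonempty fun σ : Fin N → Bool =>
    (∑ j, (if σ j then (1 : ℝ) else -1) * a j) -
      ∑ j, ∑ j', if j < j' then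
        (if σ j then (1 : ℝ) else -1) * (if σ j' then (1 : ℝ) else -1) * r j else 0

def boolSign (b : Bool) : ℝ := if b then 1 else -1

@[simp] theorem boolSign_true : boolSign true = 1 := rfl

@[simp] theorem boolSign_false : boolSign false = -1 := rfl

@[simp] theorem boolSign_not (b : Bool) : boolSign (!b) = -boolSign b := by
  cases b <;> simp

def sigObj {N : ℕ} (a r : Fin N → ℝ) (σ : Fin N → Bool) : ℝ :=
  (∑ j, boolSign (σ j) * a j) -
    ∑ j, ∑ j', if j < j' then boolSign (σ j) * boolSign (σ j') * r j else 0

theorem sigMax_eq_sup' {N : ℕ} (a r : Fin N → ℝ) :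
    sigMax N a r = univ.sup' univ_nonempty (sigObj a r) := rfl

theorem sigMax_zero (a r : Fin 0 → ℝ) : sigMax 0 a r = 0 := by
  simp [sigMax_eq_sup', sigObj]

theorem sigObj_neg {N : ℕ} (a r : Fin N → ℝ) (σ : Fin N → Bool) :
    sigObj (fun j => -a j) r σ = sigObj a r (fun j => !σ j) := by
  simp [sigObj]

theorem sigMax_neg {N : ℕ} (a r : Fin N → ℝ) : sigMax N (fun j => -a j) r = sigMax N a r := by
  have key : ∀ a : Fin N → ℝ, sigMax N (fun j => -a j) r ≤ sigMax N a r := fun a =>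
    sup'_le _ _ fun σ _ => (sigObj_neg a r σ).trans_le (le_sup' _ (mem_univ _))
  refine (key a).antisymm ?_
  simpa using key fun j => -a j

theorem sigObj_succ {N : ℕ} (a r : Fin (N + 1) → ℝ) (σ : Fin (N + 1) → Bool) :
    sigObj a r σ = boolSign (σ (Fin.last N)) * a (Fin.last N) +
      sigObj (fun j => a j.castSucc - boolSign (σ (Fin.last N)) * r j.castSucc)
        (fun j => r j.castSucc) (Fin.init σ) := by
  simp only [sigObj, Fin.sum_univ_castSucc, Fin.castSucc_lt_castSucc_iff, Fin.castSucc_lt_last,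
    if_true, fun j : Fin N => (Fin.le_last j.castSucc).not_gt, lt_irrefl, if_false, sum_const_zero,
    add_zero, Fin.init, mul_sub, sum_sub_distrib, sum_add_distrib]
  ring_nf

theorem sigMax_succ {N : ℕ} (a r : Fin (N + 1) → ℝ) :
    sigMax (N + 1) a r =
      max (a (Fin.last N) + sigMax N (fun j => a j.castSucc - r j.castSucc) (fun j => r j.castSucc))
        (-a (Fin.last N) + sigMax N (fun j => a j.castSucc + r j.castSucc) (fun j => r j.castSucc)) := by
  have hσ : ∀ σ : Fin (N + 1) → Bool, sigObj a r σ =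
      if σ (Fin.last N) then
        a (Fin.last N) + sigObj (fun j => a j.castSucc - r j.castSucc) (fun j => r j.castSucc)
          (Fin.init σ)
      else -a (Fin.last N) + sigObj (fun j => a j.castSucc + r j.castSucc) (fun j => r j.castSucc)
          (Fin.init σ) := by
    intro σ
    rw [sigObj_succ]
    cases σ (Fin.last N) <;> simp [sub_eq_add_neg]
  simp only [sigMax_eq_sup']
  refine le_antisymm (sup'_le _ _ fun σ _ => ?_) (max_le ?_ ?_)
  · rw [hσ]
    split
    · exact le_max_of_le_left ((add_le_add_iff_left _).2 (le_sup' _ (mem_univ _)))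
    · exact le_max_of_le_right ((add_le_add_iff_left _).2 (le_sup' _ (mem_univ _)))
  · rw [← le_sub_iff_add_le']
    refine sup'_le _ _ fun τ _ => le_sub_iff_add_le'.2 ?_
    have h := le_sup' (sigObj a r) (mem_univ (Fin.snoc τ true : Fin (N + 1) → Bool))
    rwa [hσ, Fin.snoc_last, Fin.init_snoc, if_pos rfl] at h
  · rw [← le_sub_iff_add_le']
    refine sup'_le _ _ fun τ _ => le_sub_iff_add_le'.2 ?_
    have h := le_sup' (sigObj a r) (mem_univ (Fin.snoc τ false : Fin (N + 1) → Bool))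
    rwa [hσ, Fin.snoc_last, Fin.init_snoc, if_neg Bool.false_ne_true] at h

/-- `sigMax` on the first `n` terms of the coefficients `a = θ r + x` and `r = x + y`. -/
noncomputable def sigMaxSplit (x y : ℕ → ℝ) (θ : ℤ) (n : ℕ) : ℝ :=
  sigMax n (fun j => θ * (x j + y j) + x j) (fun j => x j + y j)

theorem sigMax_eq_sigMaxSplit {N : ℕ} {a r : Fin N → ℝ} {x y : ℕ → ℝ} (θ : ℤ)
    (hr : ∀ j : Fin N, r j = x j + y j) (ha : ∀ j : Fin N, a j = θ * r j + x j) :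
    sigMax N a r = sigMaxSplit x y θ N := by
  unfold sigMaxSplit
  congr 1 <;> funext j <;> simp [ha, hr]

section sigMaxSplit

variable {x y : ℕ → ℝ} {θ : ℤ} {n : ℕ}

theorem sigMaxSplit_empty : sigMaxSplit x y θ 0 = 0 := sigMax_zero _ _

theorem sigMaxSplit_succ : sigMaxSplit x y θ (n + 1) =
    max (θ * (x n + y n) + x n + sigMaxSplit x y (θ - 1) n)
      (-(θ * (x n + y n) + x n) + sigMaxSplit x y (θ + 1) n) := by
  simp only [sigMaxSplit, sigMax_succ, Fin.val_last, Fin.val_castSucc]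
  congr 3 <;> funext j <;> push_cast <;> ring

theorem sigMaxSplit_swap {θ' : ℤ} (h : θ + θ' = -1) :
    sigMaxSplit x y θ n = sigMaxSplit y x θ' n := by
  obtain rfl : θ' = -1 - θ := by omega
  rw [sigMaxSplit, ← sigMax_neg]
  congr 1 <;> funext j <;> push_cast <;> ring

theorem sigMaxSplit_succ_of_le
    (h : sigMaxSplit x y (θ + 1) n - sigMaxSplit x y (θ - 1) n ≤ 2 * (θ * (x n + y n) + x n)) :
    sigMaxSplit x y θ (n + 1) = θ * (x n + y n) + x n + sigMaxSplit x y (θ - 1) n := by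
  rw [sigMaxSplit_succ, max_eq_left (by linarith)]

end sigMaxSplit

def NonnegMonotone (x : ℕ → ℝ) : Prop := Monotone x ∧ 0 ≤ x 0

theorem NonnegMonotone.of_linComb {P Q f : ℕ → ℝ} (hQ : NonnegMonotone Q)
    (hPQ : NonnegMonotone fun j => P j - Q j) {α β : ℝ} (hα : 0 ≤ α) (hαβ : 0 ≤ α + β)
    (hf : ∀ j, f j = α * P j + β * Q j) : NonnegMonotone f := by
  have hf' : ∀ j, f j = α * (P j - Q j) + (α + β) * Q j := fun j => by rw [hf]; ring
  refine ⟨fun i j hij => ?_, ?_⟩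
  · rw [hf', hf']
    exact add_le_add (mul_le_mul_of_nonneg_left (hPQ.1 hij) hα)
      (mul_le_mul_of_nonneg_left (hQ.1 hij) hαβ)
  · rw [hf']
    have := hPQ.2
    have := hQ.2
    positivity

theorem NonnegMonotone.min_const {P : ℕ → ℝ} (hP : NonnegMonotone P) {L : ℝ} (hL : 0 ≤ L) :
    NonnegMonotone fun j => min (P j) L :=
  ⟨fun _ _ hij => min_le_min_right L (hP.1 hij), le_min hP.2 hL⟩

theorem NonnegMonotone.sub_min_const {P : ℕ → ℝ} (hP : Monotone P) (L : ℝ) :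
    NonnegMonotone fun j => P j - min (P j) L := by
  refine ⟨fun i j hij => ?_, sub_nonneg.2 (min_le_left _ _)⟩
  have := hP hij
  simp only [min_def]
  split_ifs <;> linarith

section greedy

variable {x y : ℕ → ℝ}

theorem sigMaxSplit_sub_le (hx : NonnegMonotone x) (hy : NonnegMonotone y) {θ : ℤ} (hθ : 0 ≤ θ)
    (n : ℕ) :
    sigMaxSplit x y (θ + 1) n - sigMaxSplit x y (θ - 1) n ≤ 2 * (θ * (x n + y n) + x n) := by
  induction n generalizing x y θ with
  | zero =>
    have : (0 : ℝ) ≤ θ := by exact_mod_cast hθ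
    simp only [sigMaxSplit_empty, sub_zero]
    have := hx.2
    have := hy.2
    positivity
  | succ n ih =>
    have hstep : ∀ {θ' : ℤ}, 0 ≤ θ' → sigMaxSplit x y θ' (n + 1) =
        θ' * (x n + y n) + x n + sigMaxSplit x y (θ' - 1) n := fun h =>
      sigMaxSplit_succ_of_le (ih hx hy h)
    have hneg : sigMaxSplit x y (-1) (n + 1) = y n + sigMaxSplit x y 0 n := by
      rw [sigMaxSplit_swap (θ' := 0) (by norm_num), sigMaxSplit_succ_of_le (ih hy hx le_rfl),
        sigMaxSplit_swap (θ' := 0) (by norm_num)]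
      simp
    have hr : θ * (x n + y n) + x n ≤ θ * (x (n + 1) + y (n + 1)) + x (n + 1) := by
      have : (0 : ℝ) ≤ θ := by exact_mod_cast hθ
      gcongr <;> apply_rules [hx.1, hy.1, Nat.le_succ]
    rcases hθ.eq_or_lt with rfl | hθ
    · rw [zero_add, zero_sub, hstep zero_le_one, hneg, sub_self]
      push_cast at hr ⊢
      linarith
    · have h := ih hx hy (θ := θ - 1) (by omega)
      rw [sub_add_cancel] at h
      rw [hstep (by omega), hstep (by omega), add_sub_cancel_right]
      push_cast at h ⊢
      linarith

variable (hx : NonnegMonotone x) (hy : NonnegMonotone y)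
include hx hy

theorem sigMaxSplit_succ_of_nonneg {θ : ℤ} (hθ : 0 ≤ θ) (n : ℕ) :
    sigMaxSplit x y θ (n + 1) = θ * (x n + y n) + x n + sigMaxSplit x y (θ - 1) n :=
  sigMaxSplit_succ_of_le (sigMaxSplit_sub_le hx hy hθ n)

theorem sigMaxSplit_zero_succ (n : ℕ) : sigMaxSplit x y 0 (n + 1) = x n + sigMaxSplit y x 0 n := by
  rw [sigMaxSplit_succ_of_nonneg hx hy le_rfl, sigMaxSplit_swap (θ' := 0) (by norm_num)]
  simp

theorem sigMaxSplit_one_succ (n : ℕ) :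
    sigMaxSplit x y 1 (n + 1) = sigMaxSplit y x 0 (n + 1) + 2 * x n := by
  rw [sigMaxSplit_succ_of_nonneg hx hy zero_le_one, sigMaxSplit_zero_succ hy hx, sub_self]
  push_cast
  ring

theorem sigMaxSplit_zero_add_two (n : ℕ) :
    sigMaxSplit x y 0 (n + 2) = x (n + 1) + y n + sigMaxSplit x y 0 n := by
  rw [sigMaxSplit_zero_succ hx hy, sigMaxSplit_zero_succ hy hx, add_assoc]

end greedy

theorem sigMaxSplit_zero_sub_mem {x y x' y' : ℕ → ℝ} (hx : NonnegMonotone x)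
    (hy : NonnegMonotone y) (hx' : NonnegMonotone x') (hy' : NonnegMonotone y')
    (hsum : ∀ j, x' j + y' j = x j + y j) (hδ : NonnegMonotone fun j => x j - x' j) (n : ℕ) :
    0 ≤ sigMaxSplit x y 0 (n + 1) - sigMaxSplit x' y' 0 (n + 1) ∧
      sigMaxSplit x y 0 (n + 1) - sigMaxSplit x' y' 0 (n + 1) ≤ x n - x' n := by
  have hδm : ∀ j, x j - x' j ≤ x (j + 1) - x' (j + 1) := fun j => hδ.1 j.le_succ
  induction n using Nat.twoStepInduction with
  | zero =>
    simp only [sigMaxSplit_zero_succ hx hy, sigMaxSplit_zero_succ hx' hy', sigMaxSplit_empty]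
    constructor <;> linarith [hδ.2]
  | one =>
    simp only [sigMaxSplit_zero_add_two hx hy, sigMaxSplit_zero_add_two hx' hy', sigMaxSplit_empty]
    constructor <;> linarith [hδ.2, hδm 0, hsum 0]
  | more n ih _ =>
    rw [show n + 2 = n + 1 + 1 from rfl, sigMaxSplit_zero_add_two hx hy,
      sigMaxSplit_zero_add_two hx' hy']
    constructor <;> linarith [hδm n, hδm (n + 1), hsum (n + 1), ih.1, ih.2]

theorem sigMaxSplit_key_identity {P Q : ℕ → ℝ} {k l L : ℝ} (hQ : NonnegMonotone Q)
    (hPQ : NonnegMonotone fun j => P j - Q j) (hk : 2 ≤ k) (hl : 0 ≤ l) (n : ℕ)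
    (hQn : Q n = min (P n) L) :
    sigMaxSplit (fun j => k * P j + (l - 1) * Q j) Q 0 (n + 1) =
      max (sigMaxSplit (fun j => (k - 2) * P j + (l + 1) * Q j) (fun j => 2 * P j - Q j) 0 (n + 1))
        (sigMaxSplit Q (fun j => k * P j + (l - 1) * Q j) 1 (n + 1) - 2 * L) := by
  have hA : NonnegMonotone fun j => k * P j + (l - 1) * Q j :=
    hQ.of_linComb hPQ (by linarith) (by linarith) fun _ => rfl
  have hA' : NonnegMonotone fun j => (k - 2) * P j + (l + 1) * Q j :=
    hQ.of_linComb hPQ (by linarith) (by linarith) fun _ => rfl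
  have hB' : NonnegMonotone fun j => 2 * P j - Q j :=
    hQ.of_linComb hPQ (β := -1) zero_le_two (by norm_num) fun _ => by ring
  have hδ : NonnegMonotone fun j => k * P j + (l - 1) * Q j - ((k - 2) * P j + (l + 1) * Q j) :=
    hQ.of_linComb hPQ (β := -2) zero_le_two (by norm_num) fun _ => by ring
  obtain ⟨h0, h1⟩ := sigMaxSplit_zero_sub_mem hA hQ hA' hB' (fun _ => by ring) hδ n
  rw [sigMaxSplit_one_succ hQ hA]
  obtain hQP | hQL : Q n = P n ∨ Q n = L := hQn ▸ min_choice (P n) L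
  · rw [max_eq_left (by linarith [hQn ▸ min_le_right (P n) L])]
    linarith
  · rw [max_eq_right (by linarith)]
    linarith

theorem key_identity_ukdv (N' : ℕ) (hN' : 1 ≤ N') (p : Fin N' → ℝ)
    (L k l : ℝ) (hp0 : ∀ j, 0 ≤ p j) (hpmono : Monotone p)
    (hL : 0 ≤ L) (hk : 2 ≤ k) (hl : 0 ≤ l)
    (q r : Fin N' → ℝ)
    (hq : ∀ j, q j = min (p j) L)
    (hr : ∀ j, r j = k * p j + l * q j) :
    sigMax N' (fun j => k * p j + (l - 1) * q j) r =
      max (sigMax N' (fun j => (k - 2) * p j + (l + 1) * q j) r)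
          (sigMax N' (fun j => k * p j + (l + 1) * q j) r - 2 * L) := by
  obtain ⟨n, rfl⟩ : ∃ n, N' = n + 1 := ⟨N' - 1, by omega⟩
  set P : ℕ → ℝ := fun m => p (Fin.clamp m n)
  have hP : Monotone P := hpmono.comp fun i j hij => by
    simpa [Fin.le_def] using min_le_min_right n hij
  have hPj : ∀ j : Fin (n + 1), P j = p j := fun j =>
    congrArg p (Fin.ext (by simp [Fin.coe_clamp, j.is_le]))
  rw [sigMax_eq_sigMaxSplit (x := fun j => k * P j + (l - 1) * min (P j) L) 0 _ _,
    sigMax_eq_sigMaxSplit (x := fun j => (k - 2) * P j + (l + 1) * min (P j) L) 0 _ _,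
    sigMax_eq_sigMaxSplit (x := fun j => min (P j) L) 1 _ _,
    sigMaxSplit_key_identity ((NonnegMonotone.min_const ⟨hP, hp0 _⟩ hL))
      (NonnegMonotone.sub_min_const hP L) hk hl n rfl]
  all_goals
    intro j
    simp only [hPj, ← hq, hr]
    push_cast
    ring
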